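/- Let μ₀ ∈ (0, 1/3] and μᵢ = h(μᵢ₋₁), where h is the inverse of g(x) = (x+x²)/(1+x²). Then for all i ≥ 1, μᵢ < 1/i + 2(ln i)/i². -/

import Mathlib

noncomputable def h (y : ℝ) : ℝ := (-1 + Real.sqrt (1 + 4*y*(1-y))) / (2*(1-y))

noncomputable def museq (μ₀ : ℝ) : ℕ → ℝ
  | 0 => μ₀
  | i + 1 => h (museq μ₀ i)

/-!
Write `aᵢ = 1/μᵢ` and `φ(a) = a + (a - 1)/(a + 1)` (`recipStep`). Since `h` inverts `g`, one has
`1/h(y) = 1/y + (1 - h y)/(1 + h y)`, and `h y < y` gives `a_{i+1} ≥ φ(aᵢ)`; as `φ` is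
increasing, every lower bound on `aᵢ` propagates through `φ`. The claim says
`aᵢ > i²/(i + 2 log i)` (`recipBound i`).
For `i ≥ 37` this bound is itself propagated by `φ`: after `log (i+1) ≥ log i + 1/(i+1)` and
`3.6 ≤ log i ≤ i` it is a polynomial inequality with an explicit positivity certificate.
For `i ≤ 37` we iterate `φ` from `a₀ ≥ 3` numerically and only need `log i ≥ ⌊log₂ i⌋/2`.
-/

open Real

section InverseMap

variable {y : ℝ}

lemma h_pos (hy0 : 0 < y) (hy1 : y < 1) : 0 < h y := by
  have hs : 1 < sqrt (1 + 4 * y * (1 - y)) := (lt_sqrt zero_le_one).2 (by nlinarith)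
  exact div_pos (by linarith) (by linarith)

/-- `h y` is the root of `g(x) = (x + x²)/(1 + x²) = y`. -/
lemma h_inverse (hy1 : y ≠ 1) (hy : 0 ≤ 1 + 4 * y * (1 - y)) :
    y * (1 + h y ^ 2) = h y * (1 + h y) := by
  have hs2 : sqrt (1 + 4 * y * (1 - y)) ^ 2 = 1 + 4 * y * (1 - y) := sq_sqrt hy
  have hxs : 2 * (1 - y) * h y = -1 + sqrt (1 + 4 * y * (1 - y)) :=
    mul_div_cancel₀ _ (mul_ne_zero two_ne_zero (sub_ne_zero.2 hy1.symm))
  refine mul_left_cancel₀ (sub_ne_zero.2 hy1.symm) ?_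
  linear_combination
    (-(1/4) * (2 * (1 - y) * h y + 1 + sqrt (1 + 4 * y * (1 - y)))) * hxs - (1/4) * hs2

lemma h_lt_self (hy0 : 0 < y) (hy1 : y < 1) : h y < y := by
  rw [h, div_lt_iff₀ (by linarith), neg_add_lt_iff_lt_add, sqrt_lt' (by nlinarith)]
  nlinarith [mul_pos hy0 (sub_pos.2 hy1)]

lemma one_div_h (hy0 : 0 < y) (hy1 : y < 1) : 1 / h y = 1 / y + (1 - h y) / (1 + h y) := by
  have hx0 := h_pos hy0 hy1
  field_simp
  linear_combination h_inverse hy1.ne (by nlinarith)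

end InverseMap

def recipStep {K : Type*} [Field K] (a : K) : K := a + (a - 1) / (a + 1)

lemma recipStep_eq_add_one_sub {a : ℝ} (ha : -1 < a) : recipStep a = a + 1 - 2 / (a + 1) := by
  have : a + 1 ≠ 0 := by linarith
  rw [recipStep]
  field_simp
  ring

lemma recipStep_le_recipStep {a b : ℝ} (ha : -1 < a) (hab : a ≤ b) :
    recipStep a ≤ recipStep b := by
  rw [recipStep_eq_add_one_sub ha, recipStep_eq_add_one_sub (ha.trans_le hab)]
  have : 0 < a + 1 := by linarith
  gcongr

lemma recipStep_one_div_le_one_div_h {y : ℝ} (hy0 : 0 < y) (hy1 : y < 1) :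
    recipStep (1 / y) ≤ 1 / h y := by
  have hx0 := h_pos hy0 hy1
  have hxy := h_lt_self hy0 hy1
  have hrecip : recipStep (1 / y) = 1 / y + (1 - y) / (1 + y) := by
    rw [recipStep]
    field_simp
  rw [hrecip, one_div_h hy0 hy1, add_le_add_iff_left,
    div_le_div_iff₀ (by linarith) (by linarith)]
  nlinarith

section Sequence

variable {μ₀ : ℝ}

lemma museq_mem_Ioc (h0 : 0 < μ₀) (h1 : μ₀ < 1) (n : ℕ) : museq μ₀ n ∈ Set.Ioc 0 μ₀ := by
  induction n with
  | zero => exact ⟨h0, le_rfl⟩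
  | succ n ih =>
    have hlt : museq μ₀ n < 1 := ih.2.trans_lt h1
    exact ⟨h_pos ih.1 hlt, (h_lt_self ih.1 hlt).le.trans ih.2⟩

lemma recipStep_le_one_div_museq_succ (h0 : 0 < μ₀) (h1 : μ₀ < 1) {n : ℕ} {a : ℝ}
    (ha : -1 < a) (han : a ≤ 1 / museq μ₀ n) : recipStep a ≤ 1 / museq μ₀ (n + 1) := by
  have hn := museq_mem_Ioc h0 h1 n
  exact (recipStep_le_recipStep ha han).trans
    (recipStep_one_div_le_one_div_h hn.1 (hn.2.trans_lt h1))

end Sequence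

noncomputable def recipBound (x : ℝ) : ℝ := x ^ 2 / (x + 2 * log x)

lemma recipBound_pos {x : ℝ} (hx : 1 ≤ x) : 0 < recipBound x := by
  have := log_nonneg hx
  unfold recipBound
  positivity

lemma one_div_recipBound {x : ℝ} (hx : 1 ≤ x) :
    1 / recipBound x = 1 / x + 2 * log x / x ^ 2 := by
  have := log_nonneg hx
  have hden : x + 2 * log x ≠ 0 := by positivity
  have hx0 : x ≠ 0 := by positivity
  unfold recipBound
  field_simp

/-- Iterates of `recipStep` from `3`, rounded down to hundredths to keep the rationals small. -/
def lowerBound : ℕ → ℚ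
  | 0 => 3
  | n + 1 => ⌊recipStep (lowerBound n) * 100⌋ / 100

lemma one_le_lowerBound (n : ℕ) : 1 ≤ lowerBound n := by
  induction n with
  | zero => norm_num [lowerBound]
  | succ n ih =>
    have hstep : 1 ≤ recipStep (lowerBound n) :=
      le_add_of_le_of_nonneg ih (div_nonneg (by linarith) (by linarith))
    rw [lowerBound, le_div_iff₀ (by norm_num), one_mul]
    exact_mod_cast Int.le_floor.2 (by push_cast; linarith)

lemma lowerBound_succ_le (n : ℕ) : lowerBound (n + 1) ≤ recipStep (lowerBound n) := by
  rw [lowerBound, div_le_iff₀ (by norm_num)]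
  exact Int.floor_le _

lemma lowerBound_le_one_div_museq {μ₀ : ℝ} (h0 : 0 < μ₀) (h1 : μ₀ ≤ 1 / 3) (n : ℕ) :
    (lowerBound n : ℝ) ≤ 1 / museq μ₀ n := by
  induction n with
  | zero =>
    rw [museq, le_one_div (by norm_num [lowerBound]) h0]
    simpa [lowerBound] using h1
  | succ n ih =>
    calc (lowerBound (n + 1) : ℝ) ≤ recipStep (lowerBound n : ℝ) :=
          (Rat.cast_le.2 (lowerBound_succ_le n)).trans_eq (by simp [recipStep])
      _ ≤ 1 / museq μ₀ (n + 1) := by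
          refine recipStep_le_one_div_museq_succ h0 (by linarith) ?_ ih
          have := one_le_lowerBound n
          exact_mod_cast (show (-1 : ℚ) < lowerBound n by linarith)

lemma sq_div_add_natLog_lt_lowerBound :
    ∀ n : ℕ, n < 38 → 1 ≤ n → (n : ℚ) ^ 2 / (n + Nat.log 2 n) < lowerBound n := by
  decide +kernel

lemma natLog_two_le_two_mul_log (n : ℕ) : (Nat.log 2 n : ℝ) ≤ 2 * log n := by
  rcases Nat.eq_zero_or_pos n with rfl | hn
  · simp
  have hpow : ((2 ^ Nat.log 2 n : ℕ) : ℝ) ≤ n := by exact_mod_cast Nat.pow_log_le_self 2 hn.ne'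
  have hlog := log_le_log (by positivity) hpow
  push_cast at hlog
  rw [log_pow] at hlog
  nlinarith [log_two_gt_d9, Nat.cast_nonneg (α := ℝ) (Nat.log 2 n)]

lemma recipBound_lt_lowerBound {n : ℕ} (hn1 : 1 ≤ n) (hn : n < 38) :
    recipBound n < lowerBound n := by
  have hpos : (0 : ℝ) < n := by exact_mod_cast hn1
  calc recipBound n ≤ (n : ℝ) ^ 2 / (n + Nat.log 2 n) := by
        unfold recipBound
        gcongr
        exact natLog_two_le_two_mul_log n
    _ < lowerBound n := by
        have := (Rat.cast_lt (K := ℝ)).2 (sq_div_add_natLog_lt_lowerBound n hn hn1)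
        push_cast at this
        exact this

lemma log_thirtySeven_gt : 3.6 < log 37 := by
  rw [lt_log_iff_exp_lt (by norm_num)]
  refine lt_of_pow_lt_pow_left₀ 5 (by norm_num) ?_
  calc exp 3.6 ^ 5 = exp 1 ^ 18 := by rw [← exp_nat_mul, ← exp_nat_mul]; norm_num
    _ < 2.7182818286 ^ 18 := by gcongr; exact exp_one_lt_d9
    _ < 37 ^ 5 := by norm_num

lemma log_add_one_div_le_log_add_one {x : ℝ} (hx : 0 < x) :
    log x + 1 / (x + 1) ≤ log (x + 1) := by
  have h := one_sub_inv_le_log_of_pos (x := (x + 1) / x) (by positivity)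
  rw [log_div (by positivity) hx.ne', inv_div] at h
  have e : 1 - x / (x + 1) = 1 / (x + 1) := by field_simp; ring
  linarith

/-- The certificate expands around `(m, L) = (37, 3.6)`: all coefficients are nonnegative except
for a term absorbed by `L ≤ m`. -/
lemma recipBound_step_poly {m L : ℝ} (hm : 37 ≤ m) (hL : 3.6 ≤ L) (hLm : L ≤ m) :
    (m + 1) ^ 3 * (m ^ 2 + (m + 2 * L)) * (m + 2 * L) <
      (m ^ 4 + 2 * m ^ 2 * (m + 2 * L) - (m + 2 * L) ^ 2) *
        ((m + 1) ^ 2 + 2 * L * (m + 1) + 2) := by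
  rw [← sub_pos]
  have hcert :
      (m ^ 4 + 2 * m ^ 2 * (m + 2 * L) - (m + 2 * L) ^ 2) * ((m + 1) ^ 2 + 2 * L * (m + 1) + 2)
        - (m + 1) ^ 3 * (m ^ 2 + (m + 2 * L)) * (m + 2 * L)
      = 7400092/125 + 16421192/25 * (L - 3.6) + 831096/5 * (L - 3.6) ^ 2
        + 1981664/125 * (m - 37) + 1476404/25 * (m - 37) * (L - 3.6)
        + 72792/5 * (m - 37) * (L - 3.6) ^ 2 + 17612/25 * (m - 37) ^ 2
        + 8688/5 * (m - 37) ^ 2 * (L - 3.6) + 420 * (m - 37) ^ 2 * (L - 3.6) ^ 2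
        + 216/25 * (m - 37) ^ 3 + 84/5 * (m - 37) ^ 3 * (L - 3.6)
        + 4 * (m - 37) ^ 3 * (L - 3.6) ^ 2 + 8 * (L - 3.6) ^ 2 * (m + 1) * (m - L) := by
    ring
  rw [hcert]
  have hw : 0 ≤ m - 37 := by linarith
  have hv : 0 ≤ L - 3.6 := by linarith
  have hp : 0 ≤ m + 1 := by linarith
  have hu : 0 ≤ m - L := by linarith
  generalize m - 37 = w at *
  generalize L - 3.6 = v at *
  generalize m + 1 = p at *
  generalize m - L = u at *
  positivity

lemma sq_div_lt_recipStep {m L L' : ℝ} (hm : 37 ≤ m) (hL : 3.6 ≤ L) (hLm : L ≤ m)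
    (hL' : L + 1 / (m + 1) ≤ L') :
    (m + 1) ^ 2 / ((m + 1) + 2 * L') < recipStep (m ^ 2 / (m + 2 * L)) := by
  have hm1 : 0 < m + 1 := by linarith
  have hs : 0 < m + 2 * L := by linarith
  have hb : m ^ 2 / (m + 2 * L) + 1 ≠ 0 := by positivity
  calc (m + 1) ^ 2 / ((m + 1) + 2 * L')
      ≤ (m + 1) ^ 2 / ((m + 1) + 2 * (L + 1 / (m + 1))) := by gcongr
    _ = (m + 1) ^ 3 / ((m + 1) ^ 2 + 2 * L * (m + 1) + 2) := by
        field_simp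
        ring
    _ < (m ^ 4 + 2 * m ^ 2 * (m + 2 * L) - (m + 2 * L) ^ 2) /
          ((m + 2 * L) * (m ^ 2 + (m + 2 * L))) := by
        rw [div_lt_div_iff₀ (by positivity) (by positivity)]
        linarith [recipBound_step_poly hm hL hLm]
    _ = recipStep (m ^ 2 / (m + 2 * L)) := by
        rw [recipStep]
        field_simp
        ring

lemma recipBound_succ_lt {m : ℝ} (hm : 37 ≤ m) :
    recipBound (m + 1) < recipStep (recipBound m) :=
  sq_div_lt_recipStep hm (log_thirtySeven_gt.le.trans (log_le_log (by norm_num) hm))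
    ((log_le_sub_one_of_pos (by linarith)).trans (by linarith))
    (log_add_one_div_le_log_add_one (by linarith))

lemma recipBound_lt_one_div_museq {μ₀ : ℝ} (h0 : 0 < μ₀) (h1 : μ₀ ≤ 1 / 3) {n : ℕ}
    (hn : 1 ≤ n) : recipBound n < 1 / museq μ₀ n := by
  have small : ∀ n : ℕ, 1 ≤ n → n < 38 → recipBound n < 1 / museq μ₀ n := fun n hn1 hn =>
    (recipBound_lt_lowerBound hn1 hn).trans_le (lowerBound_le_one_div_museq h0 h1 n)
  have large : ∀ n : ℕ, 37 ≤ n → recipBound n < 1 / museq μ₀ n := by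
    intro n hn
    induction n, hn using Nat.le_induction with
    | base => exact small 37 (by norm_num) (by norm_num)
    | succ n hn ih =>
      have hn' : (37 : ℝ) ≤ n := by exact_mod_cast hn
      push_cast
      exact (recipBound_succ_lt hn').trans_le (recipStep_le_one_div_museq_succ h0 (by linarith)
        (by linarith [recipBound_pos (x := n) (by linarith)]) ih.le)
  rcases lt_or_ge n 38 with hlt | hge
  · exact small n hn hlt
  · exact large n (by omega)

theorem stmt_10 (μ₀ : ℝ) (h0 : 0 < μ₀) (h1 : μ₀ ≤ 1/3) :
    ∀ i : ℕ, 1 ≤ i →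
      museq μ₀ i < 1/(i : ℝ) + 2 * Real.log i / (i : ℝ)^2 := by
  intro i hi
  have hi' : (1 : ℝ) ≤ i := by exact_mod_cast hi
  have key := recipBound_lt_one_div_museq h0 h1 hi
  rwa [lt_one_div (recipBound_pos hi') (museq_mem_Ioc h0 (by linarith) i).1,
    one_div_recipBound hi'] at key
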